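/- Suppose the asset payoffs Y = (Y₀, Y₁, …, Yₙ) are integrable with Y₀ = e^r a.s. for a constant r ≥ 0, let α ∈ (0,1), and let X be an integrable random variable independent of the random vector (Y₁, …, Yₙ). Then the strategy η = (e^{−r}·VaR_α(X), 0, …, 0), which invests only in the risk-free asset, minimizes β ↦ E[ℓ_α(X − β·Y)] over β ∈ ℝ^{n+1}. -/

import Mathlib

open MeasureTheory

/-- Value-at-Risk at level `α`: `VaR_α(X) = inf {x ∈ ℝ : P(X ≤ x) ≥ α}`. -/
noncomputable def VaR {Ω : Type*} [MeasureSpace Ω] (X : Ω → ℝ) (α : ℝ) : ℝ :=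
  sInf {x : ℝ | α ≤ (volume {ω | X ω ≤ x}).toReal}

/-- The normalised Koenker–Bassett loss at level `α`:
`ℓ_α(x) = (α/(1−α))·max(x,0) + max(−x,0)`. -/
noncomputable def KBLoss (α x : ℝ) : ℝ :=
  α / (1 - α) * max x 0 + max (-x) 0

/-!
Write `q = VaR X α` and `T = β·Y`; since `Y₀` is a.s. constant, `T` is a.s. a function of
`(Y₁, …, Yₙ)` and hence independent of `X`. Convexity of `ℓ = ℓ_α` gives the pointwise bound
`ℓ(X - T) ≥ ℓ(X - q) - ℓ'₋(X - q)·(T - q)⁺ + ℓ'₊(X - q)·(T - q)⁻`. Taking expectations, independence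
factors the two correction terms, and because `q` is an `α`-quantile of `X`
(`P(X < q) ≤ α ≤ P(X ≤ q)`) we get `E ℓ'₋(X - q) ≤ 0 ≤ E ℓ'₊(X - q)`. Hence
`E ℓ(X - T) ≥ E ℓ(X - q) = E ℓ(X - η·Y)`.
-/

open ProbabilityTheory Set Filter

namespace StieltjesFunction

variable (F : StieltjesFunction ℝ)

noncomputable def quantile (α : ℝ) : ℝ := sInf {x | α ≤ F x}

variable {α : ℝ}

theorem le_apply_quantile (hne : {x | α ≤ F x}.Nonempty) :
    α ≤ F (F.quantile α) :=
  ge_of_tendsto ((F.right_continuous _).mono Ioi_subset_Ici_self).tendsto <|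
    eventually_nhdsWithin_of_forall fun _ hx ↦
      let ⟨_, hs, hsx⟩ := exists_lt_of_csInf_lt hne hx
      hs.trans (F.mono hsx.le)

theorem leftLim_quantile_le (hbdd : BddBelow {x | α ≤ F x}) :
    Function.leftLim F (F.quantile α) ≤ α :=
  le_of_tendsto (F.mono.tendsto_leftLim _) <|
    eventually_nhdsWithin_of_forall fun _ hx ↦
      (not_le.1 (notMem_of_lt_csInf (s := {x | α ≤ F x}) hx hbdd)).le

end StieltjesFunction

namespace ProbabilityTheory

variable (μ : Measure ℝ) {α : ℝ}

theorem nonempty_setOf_le_cdf (hα : α < 1) : {x | α ≤ cdf μ x}.Nonempty :=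
  let ⟨x, hx⟩ := ((tendsto_cdf_atTop μ).eventually (lt_mem_nhds hα)).exists
  ⟨x, hx.le⟩

theorem bddBelow_setOf_le_cdf (hα : 0 < α) : BddBelow {x | α ≤ cdf μ x} := by
  obtain ⟨b, hb⟩ := eventually_atBot.1 ((tendsto_cdf_atBot μ).eventually (gt_mem_nhds hα))
  exact ⟨b, fun x hx ↦ not_lt.1 fun hxb ↦ (hb x hxb.le).not_ge hx⟩

end ProbabilityTheory

section VaR

variable {Ω : Type*} [MeasureSpace Ω] [IsProbabilityMeasure (volume : Measure Ω)]
  {X : Ω → ℝ} {α : ℝ}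

theorem VaR_eq_quantile_cdf (hX : AEMeasurable X) (α : ℝ) :
    VaR X α = (cdf (volume.map X)).quantile α := by
  have := Measure.isProbabilityMeasure_map (μ := volume) hX
  unfold VaR StieltjesFunction.quantile
  congr! 3 with x
  rw [cdf_eq_real, map_measureReal_apply_of_aemeasurable hX measurableSet_Iic]
  rfl

theorem le_measureReal_le_VaR (hX : AEMeasurable X) (hα : α < 1) :
    α ≤ volume.real {ω | X ω ≤ VaR X α} := by
  have := Measure.isProbabilityMeasure_map (μ := volume) hX
  rw [VaR_eq_quantile_cdf hX]
  convert (cdf (volume.map X)).le_apply_quantile (nonempty_setOf_le_cdf _ hα) using 1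
  rw [cdf_eq_real, map_measureReal_apply_of_aemeasurable hX measurableSet_Iic]
  rfl

theorem measureReal_lt_VaR_le (hX : AEMeasurable X) (hα : 0 < α) :
    volume.real {ω | X ω < VaR X α} ≤ α := by
  have := Measure.isProbabilityMeasure_map (μ := volume) hX
  have hIio := (cdf (volume.map X)).measure_Iio (tendsto_cdf_atBot _) (VaR X α)
  rw [measure_cdf, sub_zero] at hIio
  change volume.real (X ⁻¹' Iio (VaR X α)) ≤ α
  rw [← map_measureReal_apply_of_aemeasurable hX measurableSet_Iio, measureReal_def, hIio,
    ENNReal.toReal_ofReal', max_le_iff, VaR_eq_quantile_cdf hX]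
  exact ⟨(cdf _).leftLim_quantile_le (bddBelow_setOf_le_cdf _ hα), hα.le⟩

end VaR

namespace KBLoss

variable {Ω : Type*} [MeasurableSpace Ω] {μ : Measure Ω} {α : ℝ}

/-- `slope α (Iic 0)` and `slope α (Iio 0)` are the left and right derivatives of `KBLoss α`. -/
noncomputable def slope (α : ℝ) (s : Set ℝ) (u : ℝ) : ℝ := (α - s.indicator 1 u) / (1 - α)

theorem sub_slope_mul_le (hα0 : 0 ≤ α) (hα1 : α < 1) (u t : ℝ) :
    KBLoss α u - slope α (Iic 0) u * max t 0 + slope α (Iio 0) u * max (-t) 0 ≤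
      KBLoss α (u - t) := by
  have h1α : 0 < 1 - α := by linarith
  have hK (x : ℝ) : (1 - α) * KBLoss α x = α * max x 0 + (1 - α) * max (-x) 0 := by
    unfold KBLoss; field_simp
  have hS (s : Set ℝ) : (1 - α) * slope α s u = α - s.indicator 1 u := by
    unfold slope; field_simp
  rw [← mul_le_mul_iff_of_pos_left h1α, mul_add, mul_sub, hK, hK, ← mul_assoc, hS, ← mul_assoc,
    hS]
  simp only [indicator_apply, mem_Iic, mem_Iio, Pi.one_apply, max_def]
  split_ifs <;> nlinarith

theorem measurable_slope {s : Set ℝ} (hs : MeasurableSet s) : Measurable (slope α s) :=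
  (measurable_const.sub (measurable_one.indicator hs)).div_const _

theorem integrable_comp {f : Ω → ℝ} (hf : Integrable f μ) :
    Integrable (fun ω ↦ KBLoss α (f ω)) μ :=
  (hf.pos_part.const_mul _).add hf.neg_part

theorem integrable_slope_comp [IsFiniteMeasure μ] {f : Ω → ℝ} (hf : AEMeasurable f μ) {s : Set ℝ}
    (hs : MeasurableSet s) : Integrable (fun ω ↦ slope α s (f ω)) μ :=
  ((integrable_const α).sub ((integrable_const 1).indicator₀ (hf.nullMeasurable hs))).div_const _

theorem integral_slope_comp [IsProbabilityMeasure μ] {f : Ω → ℝ} (hf : AEMeasurable f μ)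
    {s : Set ℝ} (hs : MeasurableSet s) :
    ∫ ω, slope α s (f ω) ∂μ = (α - μ.real (f ⁻¹' s)) / (1 - α) := by
  have hs' := hf.nullMeasurable hs
  change ∫ ω, (α - (f ⁻¹' s).indicator 1 ω) / (1 - α) ∂μ = _
  rw [integral_div, integral_sub (integrable_const α) ?_, integral_const, integral_indicator₀ hs']
  · simp
  · exact (integrable_const 1).indicator₀ hs'

theorem integral_slope_Iic_sub_nonpos [IsProbabilityMeasure μ] {X : Ω → ℝ} {q : ℝ}
    (hα1 : α < 1) (hX : AEMeasurable X μ) (hq : α ≤ μ.real {ω | X ω ≤ q}) :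
    ∫ ω, slope α (Iic 0) (X ω - q) ∂μ ≤ 0 := by
  rw [integral_slope_comp (hX.sub_const q) measurableSet_Iic]
  refine div_nonpos_of_nonpos_of_nonneg (sub_nonpos.2 ?_) (by linarith)
  rwa [show (fun ω ↦ X ω - q) ⁻¹' Iic 0 = {ω | X ω ≤ q} by ext; simp]

theorem integral_slope_Iio_sub_nonneg [IsProbabilityMeasure μ] {X : Ω → ℝ} {q : ℝ}
    (hα1 : α < 1) (hX : AEMeasurable X μ) (hq : μ.real {ω | X ω < q} ≤ α) :
    0 ≤ ∫ ω, slope α (Iio 0) (X ω - q) ∂μ := by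
  rw [integral_slope_comp (hX.sub_const q) measurableSet_Iio]
  refine div_nonneg (sub_nonneg.2 ?_) (by linarith)
  rwa [show (fun ω ↦ X ω - q) ⁻¹' Iio 0 = {ω | X ω < q} by ext; simp]

theorem integral_sub_quantile_le_of_indepFun [IsProbabilityMeasure μ] {X T : Ω → ℝ} {q : ℝ}
    (hα0 : 0 ≤ α) (hα1 : α < 1) (hX : Integrable X μ) (hT : Integrable T μ)
    (hXT : IndepFun X T μ) (hq : α ≤ μ.real {ω | X ω ≤ q}) (hq' : μ.real {ω | X ω < q} ≤ α) :
    ∫ ω, KBLoss α (X ω - q) ∂μ ≤ ∫ ω, KBLoss α (X ω - T ω) ∂μ := by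
  set L := fun ω ↦ slope α (Iic 0) (X ω - q)
  set R := fun ω ↦ slope α (Iio 0) (X ω - q)
  set P := fun ω ↦ max (T ω - q) 0
  set N := fun ω ↦ max (-(T ω - q)) 0
  have hXq : AEMeasurable (fun ω ↦ X ω - q) μ := hX.aemeasurable.sub_const q
  have hL : Integrable L μ := integrable_slope_comp hXq measurableSet_Iic
  have hR : Integrable R μ := integrable_slope_comp hXq measurableSet_Iio
  have hP : Integrable P μ := (hT.sub (integrable_const q)).pos_part
  have hN : Integrable N μ := (hT.sub (integrable_const q)).neg_part
  have hLP : IndepFun L P μ :=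
    hXT.comp ((measurable_slope measurableSet_Iic).comp (measurable_sub_const q))
      ((measurable_sub_const q).max measurable_const)
  have hRN : IndepFun R N μ :=
    hXT.comp ((measurable_slope measurableSet_Iio).comp (measurable_sub_const q))
      ((measurable_sub_const q).neg.max measurable_const)
  have hLPi : Integrable (L * P) μ := hLP.integrable_mul hL hP
  have hRNi : Integrable (R * N) μ := hRN.integrable_mul hR hN
  have hKX : Integrable (fun ω ↦ KBLoss α (X ω - q)) μ :=
    integrable_comp (hX.sub (integrable_const q))
  calc ∫ ω, KBLoss α (X ω - q) ∂μ
      ≤ ∫ ω, KBLoss α (X ω - q) ∂μ - (∫ ω, L ω ∂μ) * (∫ ω, P ω ∂μ)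
          + (∫ ω, R ω ∂μ) * ∫ ω, N ω ∂μ := by
        have hL_nonpos : ∫ ω, L ω ∂μ ≤ 0 :=
          integral_slope_Iic_sub_nonpos hα1 hX.aemeasurable hq
        have hR_nonneg : 0 ≤ ∫ ω, R ω ∂μ :=
          integral_slope_Iio_sub_nonneg hα1 hX.aemeasurable hq'
        have hP_nonneg : 0 ≤ ∫ ω, P ω ∂μ := integral_nonneg fun ω ↦ le_max_right _ _
        have hN_nonneg : 0 ≤ ∫ ω, N ω ∂μ := integral_nonneg fun ω ↦ le_max_right _ _
        nlinarith
    _ = ∫ ω, (KBLoss α (X ω - q) - L ω * P ω + R ω * N ω) ∂μ := by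
        rw [integral_add ?_ ?_, integral_sub hKX ?_, hLP.integral_fun_mul_eq_mul_integral hL.1 hP.1,
          hRN.integral_fun_mul_eq_mul_integral hR.1 hN.1]
        exacts [hLPi, hKX.sub hLPi, hRNi]
    _ ≤ ∫ ω, KBLoss α (X ω - T ω) ∂μ := by
        refine integral_mono ((hKX.sub hLPi).add hRNi) (integrable_comp (hX.sub hT)) fun ω ↦ ?_
        simpa only [sub_sub_sub_cancel_right] using sub_slope_mul_le hα0 hα1 (X ω - q) (T ω - q)

end KBLoss

theorem riskfree_quantile_hedge_of_indep_general
    {Ω : Type*} [MeasureSpace Ω] [IsProbabilityMeasure (volume : Measure Ω)]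
    (n : ℕ) (Y : Fin (n + 1) → Ω → ℝ)
    (hY : ∀ i, Integrable (Y i) volume)
    (r : ℝ) (hY0 : ∀ᵐ ω, Y 0 ω = Real.exp r)
    (α : ℝ) (hα : α ∈ Set.Ioo (0 : ℝ) 1)
    (X : Ω → ℝ) (hX : Integrable X volume)
    (hIndep : ProbabilityTheory.IndepFun X (fun ω (i : Fin n) => Y i.succ ω) volume)
    (η : Fin (n + 1) → ℝ)
    (hηdef : η = fun i => if i = 0 then Real.exp (-r) * VaR X α else 0) :
    ∀ β : Fin (n + 1) → ℝ,
      (∫ ω, KBLoss α (X ω - ∑ i, η i * Y i ω))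
        ≤ ∫ ω, KBLoss α (X ω - ∑ i, β i * Y i ω) := by
  intro β
  have hηY : ∀ᵐ ω, ∑ i, η i * Y i ω = VaR X α := by
    filter_upwards [hY0] with ω hω
    simp only [hηdef, Fin.sum_univ_succ, hω]
    simp [mul_right_comm _ _ (Real.exp r), ← Real.exp_add]
  have hβY : (fun ω ↦ β 0 * Real.exp r + ∑ i : Fin n, β i.succ * Y i.succ ω) =ᵐ[volume]
      fun ω ↦ ∑ i, β i * Y i ω := by
    filter_upwards [hY0] with ω hω
    simp [Fin.sum_univ_succ, hω]
  have hXβY : IndepFun X (fun ω ↦ ∑ i, β i * Y i ω) :=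
    (hIndep.comp measurable_id (by fun_prop : Measurable fun v : Fin n → ℝ ↦
      β 0 * Real.exp r + ∑ i, β i.succ * v i)).congr .rfl hβY
  calc ∫ ω, KBLoss α (X ω - ∑ i, η i * Y i ω)
      = ∫ ω, KBLoss α (X ω - VaR X α) := integral_congr_ae <| by
        filter_upwards [hηY] with ω hω
        rw [hω]
    _ ≤ ∫ ω, KBLoss α (X ω - ∑ i, β i * Y i ω) :=
        KBLoss.integral_sub_quantile_le_of_indepFun hα.1.le hα.2 hX
          (integrable_finsetSum _ fun i _ ↦ (hY i).const_mul (β i)) hXβY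
          (le_measureReal_le_VaR hX.aemeasurable hα.2) (measureReal_lt_VaR_le hX.aemeasurable hα.1)

/-- If `Y₀ = e^r` a.s. (with `r ≥ 0`) and the integrable random variable `X` is
independent of `(Y₁, …, Yₙ)`, then the strategy investing only `e^{−r}·VaR_α(X)` in the
risk-free asset minimizes `β ↦ E[ℓ_α(X − β·Y)]`. -/
theorem riskfree_quantile_hedge_of_indep
    {Ω : Type*} [MeasureSpace Ω] [IsProbabilityMeasure (volume : Measure Ω)]
    (n : ℕ) (Y : Fin (n + 1) → Ω → ℝ)
    (hY : ∀ i, Integrable (Y i) volume)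
    (r : ℝ) (hr : 0 ≤ r) (hY0 : ∀ᵐ ω, Y 0 ω = Real.exp r)
    (α : ℝ) (hα : α ∈ Set.Ioo (0 : ℝ) 1)
    (X : Ω → ℝ) (hX : Integrable X volume)
    (hIndep : ProbabilityTheory.IndepFun X (fun ω (i : Fin n) => Y i.succ ω) volume)
    (η : Fin (n + 1) → ℝ)
    (hηdef : η = fun i => if i = 0 then Real.exp (-r) * VaR X α else 0) :
    ∀ β : Fin (n + 1) → ℝ,
      (∫ ω, KBLoss α (X ω - ∑ i, η i * Y i ω))
        ≤ ∫ ω, KBLoss α (X ω - ∑ i, β i * Y i ω) :=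
  riskfree_quantile_hedge_of_indep_general n Y hY r hY0 α hα X hX hIndep η hηdef
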